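/- arXiv:1202.2094 — 2 statements merged into one kernel-verified Lean document; each statement's English description precedes it below -/
import Mathlib

section
/- For every positive integer n, the number of additive subgroups of ℤ × ℤ of index n equals σ₁(n), the sum of the positive divisors of n. -/
/-!
A subgroup `H` of finite index in `ℤ × ℤ` has a unique basis in Hermite normal form
`(a, b), (0, d)` with `a, d > 0` and `0 ≤ b < d`: here `a` and `d` are the indices of the
projection of `H` to the first factor and of its intersection with the second factor, and
`[ℤ × ℤ : H] = a * d`. So subgroups of index `n` are counted by the triples with `a * d = n`
and `0 ≤ b < d`, of which there are `∑_{a * d = n} d = σ₁(n)`.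
-/

theorem AddSubgroup.index_eq_index_map_fst_mul_index_comap_inr {G G' : Type*} [AddCommGroup G]
    [AddCommGroup G'] (H : AddSubgroup (G × G')) :
    H.index = (H.map (AddMonoidHom.fst G G')).index * (H.comap (AddMonoidHom.inr G G')).index := by
  have hfst : (AddMonoidHom.fst G G').range = ⊤ :=
    AddMonoidHom.range_eq_top_of_surjective _ Prod.fst_surjective
  have hker : (AddMonoidHom.fst G G').ker = (AddMonoidHom.inr G G').range := by
    ext ⟨x, y⟩
    simp [AddSubgroup.mem_prod, eq_comm]
  -- second isomorphism theorem: `[H ⊔ K : H] = [K : H ⊓ K]` for `K = ker fst ≅ G'`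
  rw [index_map, hfst, index_top, mul_one, index_comap, ← hker, mul_comm,
    ← relIndex_sup_left, relIndex_mul_index le_sup_left]

theorem AddSubgroup.eq_of_le_of_index_eq {G : Type*} [AddGroup G] {H K : AddSubgroup G}
    (hle : H ≤ K) (hidx : H.index = K.index) (h0 : H.index ≠ 0) : H = K := by
  have hrel : H.relIndex K * K.index = K.index := hidx ▸ relIndex_mul_index hle
  exact le_antisymm hle <| relIndex_eq_one.mp <| (Nat.mul_eq_right (hidx ▸ h0)).mp hrel

theorem Int.addSubgroup_eq_zmultiples_index (K : AddSubgroup ℤ) :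
    K = AddSubgroup.zmultiples (K.index : ℤ) := by
  obtain ⟨g, rfl⟩ := Int.subgroup_cyclic K
  rw [← AddSubgroup.zmultiples_eq_closure, Int.index_zmultiples, Int.zmultiples_natAbs]

def hnfLattice (a d : ℕ) (b : ℤ) : AddSubgroup (ℤ × ℤ) :=
  AddSubgroup.closure {((a : ℤ), b), (0, (d : ℤ))}

namespace hnfLattice

theorem mem_iff {a d : ℕ} {b : ℤ} {p : ℤ × ℤ} :
    p ∈ hnfLattice a d b ↔ ∃ s t : ℤ, s * a = p.1 ∧ s * b + t * d = p.2 := by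
  simp only [hnfLattice, AddSubgroup.mem_closure_pair, Prod.ext_iff]
  simp

theorem le_iff {a d : ℕ} {b : ℤ} {H : AddSubgroup (ℤ × ℤ)} :
    hnfLattice a d b ≤ H ↔ ((a : ℤ), b) ∈ H ∧ ((0 : ℤ), (d : ℤ)) ∈ H := by
  simp [hnfLattice, AddSubgroup.closure_le, Set.insert_subset_iff]

theorem map_fst (a d : ℕ) (b : ℤ) :
    (hnfLattice a d b).map (AddMonoidHom.fst ℤ ℤ) = AddSubgroup.zmultiples (a : ℤ) := by
  ext x
  simp only [AddSubgroup.mem_map, mem_iff, Int.mem_zmultiples_iff]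
  constructor
  · rintro ⟨p, ⟨s, -, hs, -⟩, rfl⟩
    exact ⟨s, by rw [AddMonoidHom.coe_fst, ← hs, mul_comm]⟩
  · rintro ⟨s, rfl⟩
    exact ⟨(a * s, s * b), ⟨s, 0, by ring, by ring⟩, rfl⟩

theorem comap_inr {a : ℕ} (ha : a ≠ 0) (d : ℕ) (b : ℤ) :
    (hnfLattice a d b).comap (AddMonoidHom.inr ℤ ℤ) = AddSubgroup.zmultiples (d : ℤ) := by
  ext y
  simp only [AddSubgroup.mem_comap, mem_iff, Int.mem_zmultiples_iff, AddMonoidHom.inr_apply,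
    mul_eq_zero, Int.natCast_eq_zero, ha, or_false]
  constructor
  · rintro ⟨s, t, rfl, rfl⟩
    exact ⟨t, by ring⟩
  · rintro ⟨t, rfl⟩
    exact ⟨0, t, rfl, by ring⟩

theorem index {a : ℕ} (ha : a ≠ 0) (d : ℕ) (b : ℤ) : (hnfLattice a d b).index = a * d := by
  rw [AddSubgroup.index_eq_index_map_fst_mul_index_comap_inr, map_fst, comap_inr ha,
    Int.index_zmultiples, Int.index_zmultiples, Int.natAbs_natCast, Int.natAbs_natCast]

theorem eq_iff {a d b a' d' b' : ℕ} (ha : a ≠ 0) (ha' : a' ≠ 0) (hb : b < d) (hb' : b' < d') :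
    hnfLattice a d b = hnfLattice a' d' b' ↔ a = a' ∧ d = d' ∧ b = b' := by
  refine ⟨fun h ↦ ?_, by rintro ⟨rfl, rfl, rfl⟩; rfl⟩
  have had : a = a' ∧ d = d' := by
    have hfst := congrArg (fun H ↦ (H.map (AddMonoidHom.fst ℤ ℤ)).index) h
    have hinr := congrArg (fun H ↦ (H.comap (AddMonoidHom.inr ℤ ℤ)).index) h
    simp only [map_fst, comap_inr ha, comap_inr ha', Int.index_zmultiples,
      Int.natAbs_natCast] at hfst hinr
    exact ⟨hfst, hinr⟩
  obtain ⟨rfl, rfl⟩ := had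
  refine ⟨rfl, rfl, ?_⟩
  have hdvd : (d : ℤ) ∣ (b' : ℤ) - b := by
    have hab' : ((a : ℤ), (b' : ℤ)) ∈ hnfLattice a d b := h ▸ (le_iff.mp le_rfl).1
    have hsub := sub_mem hab' (le_iff.mp le_rfl).1
    rw [Prod.mk_sub_mk, sub_self] at hsub
    rw [← Int.mem_zmultiples_iff, ← comap_inr ha d b]
    exact hsub
  exact (Int.natCast_modEq_iff.mp (Int.modEq_iff_dvd.mpr hdvd)).eq_of_lt_of_lt hb hb'

theorem exists_eq_of_index_ne_zero {H : AddSubgroup (ℤ × ℤ)} (hH : H.index ≠ 0) :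
    ∃ a d b : ℕ, a ≠ 0 ∧ b < d ∧ H = hnfLattice a d b := by
  set a := (H.map (AddMonoidHom.fst ℤ ℤ)).index
  set d := (H.comap (AddMonoidHom.inr ℤ ℤ)).index
  have hidx : H.index = a * d := H.index_eq_index_map_fst_mul_index_comap_inr
  obtain ⟨ha, hd⟩ := mul_ne_zero_iff.mp (hidx ▸ hH)
  obtain ⟨p, hpH, hp⟩ : (a : ℤ) ∈ H.map (AddMonoidHom.fst ℤ ℤ) := by
    rw [Int.addSubgroup_eq_zmultiples_index (H.map _)]
    exact AddSubgroup.mem_zmultiples _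
  have h0d : ((0 : ℤ), (d : ℤ)) ∈ H := by
    change (d : ℤ) ∈ H.comap (AddMonoidHom.inr ℤ ℤ)
    rw [Int.addSubgroup_eq_zmultiples_index (H.comap _)]
    exact AddSubgroup.mem_zmultiples _
  have hd0 : (0 : ℤ) < d := by omega
  obtain ⟨b, hb⟩ := Int.eq_ofNat_of_zero_le (Int.emod_nonneg p.2 hd0.ne')
  have hab : ((a : ℤ), (b : ℤ)) ∈ H := by
    convert sub_mem hpH (AddSubgroup.zsmul_mem H h0d (p.2 / d)) using 1
    ext
    · simpa using hp.symm
    · simp only [Prod.snd_sub, Prod.smul_snd, smul_eq_mul, ← hb, Int.emod_def]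
      ring
  refine ⟨a, d, b, ha, by have := Int.emod_lt_of_pos p.2 hd0; omega, ?_⟩
  have hindex : (hnfLattice a d b).index = H.index := by rw [index ha, hidx]
  exact (AddSubgroup.eq_of_le_of_index_eq (le_iff.mpr ⟨hab, h0d⟩) hindex (hindex ▸ hH)).symm

end hnfLattice

def hnfLatticeOfIndex (n : ℕ) (x : Σ p : n.divisorsAntidiagonal, Fin p.1.2) :
    {H : AddSubgroup (ℤ × ℤ) // H.index = n} :=
  ⟨hnfLattice x.1.1.1 x.1.1.2 x.2, by
    rw [hnfLattice.index (Nat.left_ne_zero_of_mem_divisorsAntidiagonal x.1.2),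
      (Nat.mem_divisorsAntidiagonal.mp x.1.2).1]⟩

theorem hnfLatticeOfIndex_bijective {n : ℕ} (hn : n ≠ 0) :
    Function.Bijective (hnfLatticeOfIndex n) := by
  constructor
  · rintro ⟨⟨⟨a, d⟩, h⟩, b, hb⟩ ⟨⟨⟨a', d'⟩, h'⟩, b', hb'⟩ heq
    obtain ⟨rfl, rfl, rfl⟩ := (hnfLattice.eq_iff (Nat.left_ne_zero_of_mem_divisorsAntidiagonal h)
      (Nat.left_ne_zero_of_mem_divisorsAntidiagonal h') hb hb').mp (congrArg Subtype.val heq)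
    rfl
  · rintro ⟨H, hH⟩
    obtain ⟨a, d, b, ha, hb, rfl⟩ := hnfLattice.exists_eq_of_index_ne_zero (hH ▸ hn)
    exact ⟨⟨⟨(a, d), Nat.mem_divisorsAntidiagonal.mpr ⟨by rw [← hH, hnfLattice.index ha], hn⟩⟩,
      ⟨b, hb⟩⟩, rfl⟩

/-- For every positive integer `n`, the number of additive subgroups of
`ℤ × ℤ` of index `n` equals `σ₁(n)`, the sum of the positive divisors of `n`. -/
theorem stmt8 (n : ℕ) (hn : 0 < n) :
    Nat.card {H : AddSubgroup (ℤ × ℤ) // H.index = n} = ∑ d ∈ n.divisors, d := by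
  rw [← Nat.card_eq_of_bijective _ (hnfLatticeOfIndex_bijective hn.ne'), Nat.card_eq_fintype_card,
    Fintype.card_sigma]
  simp only [Fintype.card_fin]
  rw [Finset.sum_coe_sort n.divisorsAntidiagonal (fun p ↦ p.2)]
  exact Nat.sum_divisorsAntidiagonal' (f := fun _ d ↦ d)
end

section
/- For every integer k ≥ 1: the Taylor coefficients of A_k at 0 vanish in all degrees strictly less than k(k+1)/2 and the coefficient in degree k(k+1)/2 equals 1; likewise, the Taylor coefficients of C_k at 0 vanish in all degrees strictly less than k² and the coefficient in degree k² equals 1. -/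
/-!
Write the summand of a set `s = {m₁ < ⋯ < m_k}` of positive integers as
`q ^ (d m₁ + ⋯ + d m_k) * ∏ (1 - q ^ d mᵢ)⁻²`, with `d m = m` for `A_k` and `d m = 2m - 1`
for `C_k`. Since `d` is strictly increasing, an exchange argument shows that the exponent is
minimal, equal to `N = d 1 + ⋯ + d k`, exactly for `s = {1, …, k}`. So the series is
`q ^ N * G q` where `G` converges uniformly on `‖q‖ < 1/2` (there `‖1 - q ^ n‖ ≥ 1/2`), hence is
holomorphic, and `G 0 = 1`. Leibniz's rule then gives the derivatives of order `≤ N` of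
`q ^ N * G q` at `0`.
-/

/-- MacMahon's generalized sum-of-divisors function `A_k(q)`. -/
noncomputable def macA (k : ℕ) (q : ℂ) : ℂ :=
  ∑' s : {s : Finset ℕ // s.card = k ∧ 0 ∉ s},
    ∏ m ∈ (s : Finset ℕ), q ^ m / (1 - q ^ m) ^ 2

/-- MacMahon's generalized sum-of-divisors function `C_k(q)`
(note `q^{2m₁+⋯+2m_k-k} = ∏ᵢ q^{2mᵢ-1}`). -/
noncomputable def macC (k : ℕ) (q : ℂ) : ℂ :=
  ∑' s : {s : Finset ℕ // s.card = k ∧ 0 ∉ s},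
    ∏ m ∈ (s : Finset ℕ), q ^ (2 * m - 1) / (1 - q ^ (2 * m - 1)) ^ 2

open Finset Metric Nat

theorem Finset.sum_lt_sum_of_card_eq {ι M : Type*} [DecidableEq ι] [AddCommMonoid M]
    [LinearOrder M] [IsOrderedCancelAddMonoid M] {s t : Finset ι} {f : ι → M}
    (hcard : s.card = t.card) (hne : s ≠ t) (hlt : ∀ a ∈ s \ t, ∀ b ∈ t \ s, f b < f a) :
    ∑ b ∈ t, f b < ∑ a ∈ s, f a := by
  have hB : (t \ s).Nonempty :=
    sdiff_nonempty.2 fun hts => hne (eq_of_subset_of_card_le hts hcard.le).symm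
  have hA : (s \ t).Nonempty := by
    rw [← card_pos, card_sdiff_comm hcard]
    exact hB.card_pos
  have hsdiff : ∑ b ∈ t \ s, f b < ∑ a ∈ s \ t, f a := calc
    ∑ b ∈ t \ s, f b ≤ #(t \ s) • (t \ s).sup' hB f :=
        sum_le_card_nsmul _ _ _ fun b hb => le_sup' f hb
    _ = ∑ a ∈ s \ t, (t \ s).sup' hB f := by rw [sum_const, card_sdiff_comm hcard]
    _ < ∑ a ∈ s \ t, f a :=
        sum_lt_sum_of_nonempty hA fun a ha => (sup'_lt_iff hB).2 (hlt a ha)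
  rw [← sum_inter_add_sum_sdiff t s, ← sum_inter_add_sum_sdiff s t, inter_comm]
  exact add_lt_add_right hsdiff _

abbrev PosFinset (k : ℕ) : Type := {s : Finset ℕ // s.card = k ∧ 0 ∉ s}

noncomputable def macmahonSum (d : ℕ → ℕ) (k : ℕ) (q : ℂ) : ℂ :=
  ∑' s : PosFinset k, ∏ m ∈ s.1, q ^ d m / (1 - q ^ d m) ^ 2

-- The subtraction in the exponent does not truncate, by `sum_Icc_le_sum`.
noncomputable def macmahonQuotient (d : ℕ → ℕ) (k : ℕ) (q : ℂ) : ℂ :=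
  ∑' s : PosFinset k,
    q ^ (∑ m ∈ s.1, d m - ∑ i ∈ Icc 1 k, d i) * ∏ m ∈ s.1, ((1 - q ^ d m) ^ 2)⁻¹

theorem half_le_norm_one_sub_pow {R : Type*} [NormedRing R] [NormOneClass R] {q : R}
    (hq : ‖q‖ ≤ 2⁻¹) {n : ℕ} (hn : n ≠ 0) : 2⁻¹ ≤ ‖1 - q ^ n‖ := by
  have hpow : ‖q ^ n‖ ≤ 2⁻¹ := (norm_pow_le q n).trans <|
    (pow_le_of_le_one (norm_nonneg q) (hq.trans (by norm_num)) hn).trans hq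
  have := norm_sub_norm_le (1 : R) (q ^ n)
  rw [norm_one] at this
  linarith

theorem norm_inv_one_sub_pow_sq_le {𝕜 : Type*} [NormedDivisionRing 𝕜] {q : 𝕜}
    (hq : ‖q‖ ≤ 2⁻¹) {n : ℕ} (hn : n ≠ 0) : ‖((1 - q ^ n) ^ 2)⁻¹‖ ≤ 4 := calc
  ‖((1 - q ^ n) ^ 2)⁻¹‖ = (‖1 - q ^ n‖ ^ 2)⁻¹ := by rw [norm_inv, norm_pow]
  _ ≤ ((2⁻¹ : ℝ) ^ 2)⁻¹ := by gcongr; exact half_le_norm_one_sub_pow hq hn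
  _ = 4 := by norm_num

theorem iteratedDeriv_pow_mul_zero_of_lt {𝕜 : Type*} [NontriviallyNormedField 𝕜] {g : 𝕜 → 𝕜}
    {n N : ℕ} (hg : ContDiffAt 𝕜 n g 0) (hn : n < N) :
    iteratedDeriv n (fun x => x ^ N * g x) 0 = 0 := by
  rw [iteratedDeriv_fun_mul (f := fun x => x ^ N) (by fun_prop) hg]
  refine sum_eq_zero fun i hi => ?_
  rw [iteratedDeriv_fun_pow_zero, if_neg (by simp only [mem_range] at hi; omega)]
  simp

theorem iteratedDeriv_pow_mul_zero_self {𝕜 : Type*} [NontriviallyNormedField 𝕜] {g : 𝕜 → 𝕜}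
    {N : ℕ} (hg : ContDiffAt 𝕜 N g 0) :
    iteratedDeriv N (fun x => x ^ N * g x) 0 = N ! * g 0 := by
  rw [iteratedDeriv_fun_mul (f := fun x => x ^ N) (by fun_prop) hg, sum_eq_single N]
  · rw [iteratedDeriv_fun_pow_zero, if_pos rfl, Nat.choose_self, Nat.sub_self, iteratedDeriv_zero]
    push_cast
    ring
  · intro i _ hi
    rw [iteratedDeriv_fun_pow_zero, if_neg hi]
    simp
  · simp

section MacMahon

variable {d : ℕ → ℕ} {k : ℕ}

theorem sum_Icc_lt_sum_of_ne (hd : StrictMono d) (s : PosFinset k) (hs : s.1 ≠ Icc 1 k) :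
    ∑ i ∈ Icc 1 k, d i < ∑ m ∈ s.1, d m := by
  refine sum_lt_sum_of_card_eq (by simp [s.2.1]) hs fun a ha b hb => hd ?_
  have ha0 : a ≠ 0 := fun h => s.2.2 (h ▸ (mem_sdiff.1 ha).1)
  simp only [mem_sdiff, mem_Icc] at ha hb
  omega

theorem sum_Icc_le_sum (hd : StrictMono d) (s : PosFinset k) :
    ∑ i ∈ Icc 1 k, d i ≤ ∑ m ∈ s.1, d m := by
  by_cases hs : s.1 = Icc 1 k
  · rw [hs]
  · exact (sum_Icc_lt_sum_of_ne hd s hs).le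

theorem apply_ne_zero_of_mem (hd : StrictMono d) (s : PosFinset k) {m : ℕ} (hm : m ∈ s.1) :
    d m ≠ 0 := by
  have hm0 : m ≠ 0 := by rintro rfl; exact s.2.2 hm
  exact (Nat.pos_of_ne_zero hm0).trans_le (hd.id_le m) |>.ne'

theorem inv_two_pow_sub_sum_Icc_le (hd : StrictMono d) (s : PosFinset k) :
    (2⁻¹ : ℝ) ^ (∑ m ∈ s.1, d m - ∑ i ∈ Icc 1 k, d i) ≤
      2 ^ (∑ i ∈ Icc 1 k, d i) * ∏ m ∈ s.1, (2⁻¹ : ℝ) ^ m := calc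
  _ = 2 ^ (∑ i ∈ Icc 1 k, d i) * (2⁻¹ : ℝ) ^ (∑ m ∈ s.1, d m) := by
    rw [pow_sub₀ _ (by norm_num) (sum_Icc_le_sum hd s), inv_pow, inv_pow, inv_inv, mul_comm]
  _ ≤ _ := by
    gcongr
    rw [← prod_pow_eq_pow_sum]
    exact prod_le_prod (fun _ _ => by positivity) fun m _ =>
      pow_le_pow_of_le_one (by norm_num) (by norm_num) (hd.id_le m)

theorem differentiableOn_macmahonQuotient (hd : StrictMono d) :
    DifferentiableOn ℂ (macmahonQuotient d k) (ball 0 2⁻¹) := by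
  have hsum : Summable fun s : PosFinset k => ∏ m ∈ s.1, (2⁻¹ : ℝ) ^ m :=
    (summable_finsetProd_of_summable_nonneg (fun _ => by positivity)
      (summable_geometric_of_lt_one (by norm_num) (by norm_num))).comp_injective
      Subtype.val_injective
  refine Complex.differentiableOn_tsum_of_summable_norm
    (u := fun s : PosFinset k => 4 ^ k * (2 ^ (∑ i ∈ Icc 1 k, d i) * ∏ m ∈ s.1, (2⁻¹ : ℝ) ^ m))
    ((hsum.mul_left _).mul_left _) (fun s => ?_) isOpen_ball fun s q hq => ?_
  · refine (differentiable_pow _).differentiableOn.mul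
      (DifferentiableOn.fun_finsetProd fun m hm => ?_)
    refine (((differentiableOn_const _).sub (differentiable_pow _).differentiableOn).pow 2).inv
      fun q hq => pow_ne_zero 2 <| norm_pos_iff.1 <| (by norm_num : (0 : ℝ) < 2⁻¹).trans_le <|
        half_le_norm_one_sub_pow (mem_ball_zero_iff.1 hq).le (apply_ne_zero_of_mem hd s hm)
  · have hq' : ‖q‖ ≤ 2⁻¹ := (mem_ball_zero_iff.1 hq).le
    rw [norm_mul, norm_prod, norm_pow, mul_comm]
    refine mul_le_mul ?_ ((pow_le_pow_left₀ (norm_nonneg q) hq' _).trans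
      (inv_two_pow_sub_sum_Icc_le hd s)) (by positivity) (by positivity)
    calc ∏ m ∈ s.1, ‖((1 - q ^ d m) ^ 2)⁻¹‖ ≤ ∏ m ∈ s.1, 4 :=
          prod_le_prod (fun _ _ => norm_nonneg _) fun m hm =>
            norm_inv_one_sub_pow_sq_le hq' (apply_ne_zero_of_mem hd s hm)
      _ = 4 ^ k := by rw [prod_const, s.2.1]

theorem macmahonSum_eq_pow_mul (hd : StrictMono d) (q : ℂ) :
    macmahonSum d k q = q ^ (∑ i ∈ Icc 1 k, d i) * macmahonQuotient d k q := by
  rw [macmahonQuotient, ← tsum_mul_left]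
  refine tsum_congr fun s => ?_
  rw [← mul_assoc, ← pow_add, Nat.add_sub_cancel' (sum_Icc_le_sum hd s),
    ← prod_pow_eq_pow_sum, ← prod_mul_distrib]
  simp_rw [div_eq_mul_inv]

theorem macmahonQuotient_zero (hd : StrictMono d) : macmahonQuotient d k 0 = 1 := by
  let t : PosFinset k := ⟨Icc 1 k, by simp⟩
  rw [macmahonQuotient, tsum_eq_single t]
  · rw [Nat.sub_self, pow_zero, one_mul]
    exact prod_eq_one fun m hm => by
      rw [zero_pow (apply_ne_zero_of_mem hd t hm), sub_zero, one_pow, inv_one]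
  · intro s hs
    have hlt := sum_Icc_lt_sum_of_ne hd s fun h => hs (Subtype.ext h)
    rw [zero_pow (Nat.sub_ne_zero_of_lt hlt), zero_mul]

theorem contDiffAt_macmahonQuotient (hd : StrictMono d) (n : WithTop ℕ∞) :
    ContDiffAt ℂ n (macmahonQuotient d k) 0 :=
  ((differentiableOn_macmahonQuotient hd).contDiffOn isOpen_ball).contDiffAt
    (ball_mem_nhds 0 (by norm_num))

theorem iteratedDeriv_macmahonSum_zero_of_lt (hd : StrictMono d) {n : ℕ}
    (hn : n < ∑ i ∈ Icc 1 k, d i) : iteratedDeriv n (macmahonSum d k) 0 = 0 := by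
  rw [funext (macmahonSum_eq_pow_mul hd)]
  exact iteratedDeriv_pow_mul_zero_of_lt (contDiffAt_macmahonQuotient hd n) hn

theorem iteratedDeriv_macmahonSum_zero_sum_Icc (hd : StrictMono d) :
    iteratedDeriv (∑ i ∈ Icc 1 k, d i) (macmahonSum d k) 0 = (∑ i ∈ Icc 1 k, d i)! := by
  rw [funext (macmahonSum_eq_pow_mul hd), iteratedDeriv_pow_mul_zero_self
    (contDiffAt_macmahonQuotient hd _), macmahonQuotient_zero hd, mul_one]

end MacMahon

theorem sum_Icc_id_eq (k : ℕ) : ∑ i ∈ Icc 1 k, i = k * (k + 1) / 2 := by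
  suffices (∑ i ∈ Icc 1 k, i) * 2 = k * (k + 1) by omega
  induction k with
  | zero => simp
  | succ k ih =>
    rw [sum_Icc_succ_top (by omega), add_mul, ih]
    ring

theorem sum_Icc_two_mul_sub_one (k : ℕ) : ∑ i ∈ Icc 1 k, (2 * i - 1) = k ^ 2 := by
  induction k with
  | zero => simp
  | succ k ih =>
    rw [sum_Icc_succ_top (by omega), ih]
    grind

theorem stmt16_general (k : ℕ) :
    (∀ n : ℕ, n < k * (k + 1) / 2 → iteratedDeriv n (macA k) 0 = 0) ∧
    iteratedDeriv (k * (k + 1) / 2) (macA k) 0 / (k * (k + 1) / 2).factorial = 1 ∧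
    (∀ n : ℕ, n < k ^ 2 → iteratedDeriv n (macC k) 0 = 0) ∧
    iteratedDeriv (k ^ 2) (macC k) 0 / (k ^ 2).factorial = 1 := by
  have hA : macA k = macmahonSum (fun m => m) k := rfl
  have hC : macC k = macmahonSum (fun m => 2 * m - 1) k := rfl
  have hA_mono : StrictMono fun m : ℕ => m := strictMono_id
  have hC_mono : StrictMono fun m : ℕ => 2 * m - 1 := fun a b h => by dsimp only; omega
  have hfac (N : ℕ) : (N ! : ℂ) / N ! = 1 := div_self (Nat.cast_ne_zero.2 N.factorial_ne_zero)
  rw [hA, hC, ← sum_Icc_id_eq, ← sum_Icc_two_mul_sub_one]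
  exact ⟨fun n => iteratedDeriv_macmahonSum_zero_of_lt hA_mono,
    by rw [iteratedDeriv_macmahonSum_zero_sum_Icc hA_mono, hfac],
    fun n => iteratedDeriv_macmahonSum_zero_of_lt hC_mono,
    by rw [iteratedDeriv_macmahonSum_zero_sum_Icc hC_mono, hfac]⟩

/-- For `k ≥ 1`: the Taylor coefficients of `A_k` at `0` (i.e.
`iteratedDeriv n (A_k) 0 / n!`) vanish in all degrees `< k(k+1)/2` and equal `1` in
degree `k(k+1)/2`; likewise the Taylor coefficients of `C_k` vanish in degrees `< k²`
and equal `1` in degree `k²`. -/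
theorem stmt16 (k : ℕ) (hk : 1 ≤ k) :
    (∀ n : ℕ, n < k * (k + 1) / 2 → iteratedDeriv n (macA k) 0 = 0) ∧
    iteratedDeriv (k * (k + 1) / 2) (macA k) 0 / (k * (k + 1) / 2).factorial = 1 ∧
    (∀ n : ℕ, n < k ^ 2 → iteratedDeriv n (macC k) 0 = 0) ∧
    iteratedDeriv (k ^ 2) (macC k) 0 / (k ^ 2).factorial = 1 :=
  stmt16_general k
end
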